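/- For ω > 4/√π, evaluating the Thomas-Fermi functional at ρ^{TF}(r) = (ω²/8)[r² − R_h²]₊ with R_h² = 1 − 4/(√π ω) gives E^{TF}[ρ^{TF}] = −(ω²/4)(1 − 8/(3√π ω)). -/

import Mathlib

/-!
With `a = ω² / 8` and `ρ = a [r² - R]₊`, the Thomas–Fermi integrand `ρ² - 2 a r² ρ` factors as
`-a² (r² - R)(r² + R)` on the support of `ρ`, i.e. it is `-a² [r⁴ - R²]₊`. In polar coordinates
the energy is therefore `-2π a² ∫₀¹ r [r⁴ - R²]₊ dr = -2π a² (1 - R)² (1 + 2R) / 6`, and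
`1 - R = 4 / (√π ω)` turns this into `-(ω² / 12) (1 + 2R)`, which is the claimed value.
-/

open Real MeasureTheory Set Metric Module

theorem setIntegral_ball_fun_norm_addHaar {E F : Type*} [NormedAddCommGroup E] [NormedSpace ℝ E]
    [Nontrivial E] [FiniteDimensional ℝ E] [MeasurableSpace E] [BorelSpace E] (μ : Measure E)
    [μ.IsAddHaarMeasure] [NormedAddCommGroup F] [NormedSpace ℝ F] (f : ℝ → F) (r : ℝ) :
    ∫ x in ball 0 r, f ‖x‖ ∂μ
      = finrank ℝ E • μ.real (ball 0 1) • ∫ y in Ioo 0 r, y ^ (finrank ℝ E - 1) • f y := by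
  have hball : (ball (0 : E) r).indicator (fun x ↦ f ‖x‖) = fun x ↦ (Iio r).indicator f ‖x‖ := by
    ext x
    simp only [indicator, mem_ball_zero_iff, mem_Iio]
  rw [← integral_indicator measurableSet_ball, hball, integral_fun_norm_addHaar μ,
    ← Ioi_inter_Iio, ← setIntegral_indicator measurableSet_Iio]
  simp_rw [indicator_smul_apply]

theorem setIntegral_ball_fin_two_fun_norm (f : ℝ → ℝ) {r : ℝ} (hr : 0 ≤ r) :
    ∫ x in ball (0 : EuclideanSpace ℝ (Fin 2)) r, f ‖x‖ = 2 * π * ∫ y in 0..r, y * f y := by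
  rw [setIntegral_ball_fun_norm_addHaar, finrank_euclideanSpace_fin, measureReal_def,
    EuclideanSpace.volume_ball_fin_two, intervalIntegral.integral_of_le hr,
    integral_Ioc_eq_integral_Ioo]
  simp [ENNReal.toReal_ofReal pi_pos.le, mul_assoc]

theorem integral_mul_max_zero_pow_four_sub_sq {R : ℝ} (h0 : 0 ≤ R) (h1 : R ≤ 1) :
    ∫ r in 0..1, r * max 0 (r ^ 4 - R ^ 2) = (1 - R) ^ 2 * (1 + 2 * R) / 6 := by
  set c := √R
  have hc0 : 0 ≤ c := sqrt_nonneg R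
  have hc1 : c ≤ 1 := sqrt_le_one.2 h1
  have hcR : c ^ 2 = R := sq_sqrt h0
  have hint (a b : ℝ) : IntervalIntegrable (fun r ↦ r * max 0 (r ^ 4 - R ^ 2)) volume a b :=
    (by fun_prop : Continuous fun r : ℝ ↦ r * max 0 (r ^ 4 - R ^ 2)).intervalIntegrable a b
  have hinner : ∫ r in 0..c, r * max 0 (r ^ 4 - R ^ 2) = 0 := by
    refine (intervalIntegral.integral_congr fun r hr ↦ ?_).trans intervalIntegral.integral_zero
    rw [uIcc_of_le hc0] at hr
    have : r ^ 4 ≤ R ^ 2 := by rw [← hcR]; nlinarith [pow_le_pow_left₀ hr.1 hr.2 2]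
    simp [max_eq_left (sub_nonpos.2 this)]
  have houter : ∫ r in c..1, r * max 0 (r ^ 4 - R ^ 2)
      = (1 - c ^ 6) / 6 - R ^ 2 * (1 - c ^ 2) / 2 := by
    rw [intervalIntegral.integral_congr (g := fun r ↦ r ^ 5 - R ^ 2 * r) fun r hr ↦ ?_]
    · rw [intervalIntegral.integral_sub (intervalIntegral.intervalIntegrable_pow 5)
        (intervalIntegral.intervalIntegrable_id.const_mul _),
        intervalIntegral.integral_const_mul, integral_pow, integral_id]
      ring
    rw [uIcc_of_le hc1] at hr
    have : R ^ 2 ≤ r ^ 4 := by rw [← hcR]; nlinarith [pow_le_pow_left₀ hc0 hr.1 2]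
    simp only [max_eq_right (sub_nonneg.2 this)]
    ring
  rw [← intervalIntegral.integral_add_adjacent_intervals (hint 0 c) (hint c 1), hinner, houter,
    show c ^ 6 = (c ^ 2) ^ 3 by ring, hcR]
  ring

noncomputable def tfDensity (ω R r : ℝ) : ℝ := ω ^ 2 / 8 * max 0 (r ^ 2 - R)

theorem tfDensity_sq_sub {R : ℝ} (hR : 0 ≤ R) (ω r : ℝ) :
    tfDensity ω R r ^ 2 - ω ^ 2 * r ^ 2 * tfDensity ω R r / 4
      = -(ω ^ 2 / 8) ^ 2 * max 0 (r ^ 4 - R ^ 2) := by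
  rcases le_total (r ^ 2) R with hr | hr
  · have hr4 : r ^ 4 ≤ R ^ 2 := by nlinarith [sq_nonneg r]
    simp [tfDensity, max_eq_left (sub_nonpos.2 hr), max_eq_left (sub_nonpos.2 hr4)]
  · have hr4 : R ^ 2 ≤ r ^ 4 := by nlinarith
    rw [tfDensity, max_eq_right (sub_nonneg.2 hr), max_eq_right (sub_nonneg.2 hr4)]
    ring

theorem tf_energy_hole (ω : ℝ) (hω : ω > 4 / Real.sqrt π)
    (Rh2 : ℝ) (hRh2 : Rh2 = 1 - 4 / (Real.sqrt π * ω))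
    (ρTF : ℝ → ℝ) (hρTF : ∀ r, ρTF r = ω ^ 2 / 8 * max 0 (r ^ 2 - Rh2)) :
    (∫ x in Metric.ball (0 : EuclideanSpace ℝ (Fin 2)) 1,
        (ρTF ‖x‖ ^ 2 - ω ^ 2 * ‖x‖ ^ 2 * ρTF ‖x‖ / 4))
      = -(ω ^ 2 / 4) * (1 - 8 / (3 * Real.sqrt π * ω)) := by
  obtain rfl : ρTF = tfDensity ω Rh2 := funext hρTF
  have hs : 0 < √π := sqrt_pos.2 pi_pos
  have hω0 : 0 < ω := (div_pos four_pos hs).trans hω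
  have hR0 : 0 ≤ Rh2 := by
    rw [hRh2, sub_nonneg, div_le_one (mul_pos hs hω0), ← div_le_iff₀' hs]
    exact hω.le
  have hR1 : Rh2 ≤ 1 := by
    rw [hRh2]
    linarith [div_pos four_pos (mul_pos hs hω0)]
  rw [setIntegral_ball_fin_two_fun_norm (fun r ↦ tfDensity ω Rh2 r ^ 2
    - ω ^ 2 * r ^ 2 * tfDensity ω Rh2 r / 4) zero_le_one]
  simp_rw [tfDensity_sq_sub hR0, mul_left_comm _ (-(ω ^ 2 / 8) ^ 2)]
  rw [intervalIntegral.integral_const_mul, integral_mul_max_zero_pow_four_sub_sq hR0 hR1, hRh2]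
  field_simp
  rw [sq_sqrt pi_pos.le]
  ring
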